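/- Elimination of the internal variable in the linear isotropic Cahn–Hilliard-type system: Let Γ, ξ : ℝ × ℝ³ → ℝ be smooth scalar fields, j, A : ℝ × ℝ³ → ℝ³ smooth vector fields, and m, l₁₁, l₁₂, l₂₁, l₂₂, l₃ real constants with l₁₂ ≠ 0 and l₃ ≠ 0. Assume the conductivity equations j = l₁₁ ∇Γ - l₁₂ m ∇ξ and A = l₂₁ ∇Γ - l₂₂ m ∇ξ, and the evolution equation ∂ₜξ + ∇·A + l₃ m ξ = 0. Then the current satisfies j = l₁₁ ∇Γ + ((l₁₂ l₂₁ - l₁₁ l₂₂)/l₃) ∇(ΔΓ) + (l₂₂/l₃) ∇(∇·j) + (l₁₂/l₃) ∇(∂ₜξ). -/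

import Mathlib

/-- Spacetime points: time `t : ℝ` and position `x : Fin 3 → ℝ`. -/
abbrev SpaceTime : Type := ℝ × (Fin 3 → ℝ)

/-- Partial time derivative `∂ₜ`. -/
noncomputable def timeDeriv (f : SpaceTime → ℝ) (p : SpaceTime) : ℝ :=
  fderiv ℝ f p (1, 0)

/-- Partial spatial derivative `∂ᵢ` in direction `i`. -/
noncomputable def spaceDeriv (i : Fin 3) (f : SpaceTime → ℝ) (p : SpaceTime) : ℝ :=
  fderiv ℝ f p (0, Pi.single i 1)

/-- Spatial divergence `∇·` of a vector field. -/
noncomputable def diverg (q : SpaceTime → (Fin 3 → ℝ)) (p : SpaceTime) : ℝ :=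
  ∑ i, spaceDeriv i (fun x => q x i) p

/-- Spatial Laplacian `Δ` of a scalar field. -/
noncomputable def laplacian (f : SpaceTime → ℝ) (p : SpaceTime) : ℝ :=
  ∑ i, spaceDeriv i (spaceDeriv i f) p


section Aux

lemma fderiv_apply_smooth {f : SpaceTime → ℝ} (hf : ContDiff ℝ (⊤ : ℕ∞) f) (v : SpaceTime) :
    ContDiff ℝ (⊤ : ℕ∞) (fun p => fderiv ℝ f p v) :=
  (ContinuousLinearMap.apply ℝ ℝ v).contDiff.comp (hf.fderiv_right (by simp))

lemma spaceDeriv_smooth {f : SpaceTime → ℝ} (hf : ContDiff ℝ (⊤ : ℕ∞) f) (i : Fin 3) :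
    ContDiff ℝ (⊤ : ℕ∞) (spaceDeriv i f) :=
  fderiv_apply_smooth hf _

lemma timeDeriv_smooth {f : SpaceTime → ℝ} (hf : ContDiff ℝ (⊤ : ℕ∞) f) :
    ContDiff ℝ (⊤ : ℕ∞) (timeDeriv f) :=
  fderiv_apply_smooth hf _

lemma diverg_smooth {q : SpaceTime → (Fin 3 → ℝ)} (hq : ContDiff ℝ (⊤ : ℕ∞) q) :
    ContDiff ℝ (⊤ : ℕ∞) (diverg q) := by
  unfold diverg
  exact ContDiff.sum fun i _ => spaceDeriv_smooth (contDiff_pi.mp hq i) i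

lemma laplacian_smooth {f : SpaceTime → ℝ} (hf : ContDiff ℝ (⊤ : ℕ∞) f) :
    ContDiff ℝ (⊤ : ℕ∞) (laplacian f) := by
  unfold laplacian
  exact ContDiff.sum fun i _ => spaceDeriv_smooth (spaceDeriv_smooth hf i) i

lemma spaceDeriv_comb {f g : SpaceTime → ℝ} (hf : ContDiff ℝ (⊤ : ℕ∞) f) (hg : ContDiff ℝ (⊤ : ℕ∞) g)
    (a b : ℝ) (i : Fin 3) (p : SpaceTime) :
    spaceDeriv i (fun q => a * f q + b * g q) p
      = a * spaceDeriv i f p + b * spaceDeriv i g p := by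
  have hfd : DifferentiableAt ℝ f p := (hf.differentiable (by simp)) p
  have hgd : DifferentiableAt ℝ g p := (hg.differentiable (by simp)) p
  unfold spaceDeriv
  rw [fderiv_fun_add (hfd.const_mul a) (hgd.const_mul b), fderiv_const_mul hfd,
    fderiv_const_mul hgd]
  simp

lemma spaceDeriv_const_mul {f : SpaceTime → ℝ} (hf : ContDiff ℝ (⊤ : ℕ∞) f)
    (a : ℝ) (i : Fin 3) (p : SpaceTime) :
    spaceDeriv i (fun q => a * f q) p = a * spaceDeriv i f p := by
  unfold spaceDeriv
  rw [fderiv_const_mul ((hf.differentiable (by simp)) p)]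
  simp

end Aux

/-- **Elimination of the internal variable in the linear isotropic
Cahn–Hilliard-type system.** From `j = l₁₁ ∇Γ - l₁₂ m ∇ξ`,
`A = l₂₁ ∇Γ - l₂₂ m ∇ξ` and `∂ₜξ + ∇·A + l₃ m ξ = 0` one obtains
`j = l₁₁ ∇Γ + ((l₁₂ l₂₁ - l₁₁ l₂₂)/l₃) ∇(ΔΓ) + (l₂₂/l₃) ∇(∇·j)
  + (l₁₂/l₃) ∇(∂ₜξ)`. -/
theorem cahn_hilliard_internal_variable_elimination
    (Γ ξ : SpaceTime → ℝ) (j A : SpaceTime → (Fin 3 → ℝ))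
    (m l₁₁ l₁₂ l₂₁ l₂₂ l₃ : ℝ) (hl₁₂ : l₁₂ ≠ 0) (hl₃ : l₃ ≠ 0)
    (hΓ : ContDiff ℝ (⊤ : ℕ∞) Γ) (hξ : ContDiff ℝ (⊤ : ℕ∞) ξ)
    (hj : ContDiff ℝ (⊤ : ℕ∞) j) (hA : ContDiff ℝ (⊤ : ℕ∞) A)
    (h1 : ∀ (p : SpaceTime) (i : Fin 3),
      j p i = l₁₁ * spaceDeriv i Γ p - l₁₂ * m * spaceDeriv i ξ p)
    (h2 : ∀ (p : SpaceTime) (i : Fin 3),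
      A p i = l₂₁ * spaceDeriv i Γ p - l₂₂ * m * spaceDeriv i ξ p)
    (h3 : ∀ p : SpaceTime, timeDeriv ξ p + diverg A p + l₃ * m * ξ p = 0) :
    ∀ (p : SpaceTime) (i : Fin 3),
      j p i = l₁₁ * spaceDeriv i Γ p +
        ((l₁₂ * l₂₁ - l₁₁ * l₂₂) / l₃) * spaceDeriv i (laplacian Γ) p +
        (l₂₂ / l₃) * spaceDeriv i (diverg j) p +
        (l₁₂ / l₃) * spaceDeriv i (timeDeriv ξ) p := by

  -- smoothness of components
  have hjc : ∀ i : Fin 3, ContDiff ℝ (⊤ : ℕ∞) (fun q => j q i) := fun i => contDiff_pi.mp hj i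
  have hAc : ∀ i : Fin 3, ContDiff ℝ (⊤ : ℕ∞) (fun q => A q i) := fun i => contDiff_pi.mp hA i
  -- m Δξ bookkeeping: define s q = ∑ m * ∂ᵢ∂ᵢ ξ q
  have hsmooth_mlap : ContDiff ℝ (⊤ : ℕ∞) (fun q => m * laplacian ξ q) :=
    (contDiff_const (c := m)).mul (laplacian_smooth hξ)
  -- diverg j and diverg A in terms of laplacians
  have hdivj : ∀ q, diverg j q = l₁₁ * laplacian Γ q - l₁₂ * (m * laplacian ξ q) := by
    intro q
    unfold diverg laplacian
    have key : ∀ i : Fin 3, spaceDeriv i (fun x => j x i) q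
        = l₁₁ * spaceDeriv i (spaceDeriv i Γ) q
          - l₁₂ * (m * spaceDeriv i (spaceDeriv i ξ) q) := by
      intro i
      have hfun : (fun x => j x i)
          = fun q => l₁₁ * spaceDeriv i Γ q + (-(l₁₂ * m)) * spaceDeriv i ξ q := by
        funext q; rw [h1 q i]; ring
      rw [hfun, spaceDeriv_comb (spaceDeriv_smooth hΓ i) (spaceDeriv_smooth hξ i)]
      ring
    simp only [key]
    rw [Finset.sum_sub_distrib, ← Finset.mul_sum]
    congr 1
    rw [← Finset.mul_sum, ← Finset.mul_sum]
  have hdivA : ∀ q, diverg A q = l₂₁ * laplacian Γ q - l₂₂ * (m * laplacian ξ q) := by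
    intro q
    unfold diverg laplacian
    have key : ∀ i : Fin 3, spaceDeriv i (fun x => A x i) q
        = l₂₁ * spaceDeriv i (spaceDeriv i Γ) q
          - l₂₂ * (m * spaceDeriv i (spaceDeriv i ξ) q) := by
      intro i
      have hfun : (fun x => A x i)
          = fun q => l₂₁ * spaceDeriv i Γ q + (-(l₂₂ * m)) * spaceDeriv i ξ q := by
        funext q; rw [h2 q i]; ring
      rw [hfun, spaceDeriv_comb (spaceDeriv_smooth hΓ i) (spaceDeriv_smooth hξ i)]
      ring
    simp only [key]
    rw [Finset.sum_sub_distrib, ← Finset.mul_sum]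
    congr 1
    rw [← Finset.mul_sum, ← Finset.mul_sum]
  -- express diverg A as combination of laplacian Γ and diverg j
  have hA_eq : diverg A = fun q =>
      ((l₁₂ * l₂₁ - l₁₁ * l₂₂) / l₁₂) * laplacian Γ q + (l₂₂ / l₁₂) * diverg j q := by
    funext q
    rw [hdivA q, hdivj q]
    field_simp
    ring
  intro p i
  have hstep3 : spaceDeriv i (diverg A) p
      = ((l₁₂ * l₂₁ - l₁₁ * l₂₂) / l₁₂) * spaceDeriv i (laplacian Γ) p
        + (l₂₂ / l₁₂) * spaceDeriv i (diverg j) p := by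
    rw [hA_eq, spaceDeriv_comb (laplacian_smooth hΓ) (diverg_smooth hj)]
  have hstep2 : (l₃ * m) * spaceDeriv i ξ p
      = - spaceDeriv i (timeDeriv ξ) p - spaceDeriv i (diverg A) p := by
    have h : spaceDeriv i (fun q => (l₃ * m) * ξ q) p
        = spaceDeriv i (fun q => (-1 : ℝ) * timeDeriv ξ q + (-1 : ℝ) * diverg A q) p := by
      congr 1
      funext q
      have := h3 q
      linarith
    rw [spaceDeriv_const_mul hξ,
      spaceDeriv_comb (timeDeriv_smooth hξ) (diverg_smooth hA)] at h
    linarith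
  rw [hstep3] at hstep2
  have h2' : l₁₂ * ((l₃ * m) * spaceDeriv i ξ p)
      = l₁₂ * (- spaceDeriv i (timeDeriv ξ) p)
        - ((l₁₂ * l₂₁ - l₁₁ * l₂₂) * spaceDeriv i (laplacian Γ) p
          + l₂₂ * spaceDeriv i (diverg j) p) := by
    rw [hstep2]
    field_simp
  rw [h1 p i]
  apply mul_left_cancel₀ hl₃
  field_simp
  linear_combination -h2'
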